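/- arXiv:1712.01350 — 6 statements merged into one kernel-verified Lean document; each statement's English description precedes it below -/
import Mathlib

section
/- Let n ≥ 1, N = 2^n, and let w = (w_0,…,w_{n-1}) be a real vector. Then (1/N) Σ_{x ∈ {0,1}^n} exp(2πi (Σ_j w_j x_j)/N) = 0 if and only if there exists an index 0 ≤ j ≤ n-1 such that w_j ≡ 2^{n-1} (mod 2^n), i.e., w_j = 2^{n-1} + k·2^n for some integer k. -/
/-! The sum over bit vectors is the expansion of `∏ j, (1 + exp (2πi w_j / N))`, so it vanishes
iff some factor does, i.e. iff `exp (2πi w_j / N) = -1`, i.e. iff `w_j ∈ N/2 + Nℤ`. -/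

open Complex Finset Real

lemma sum_fin_two_pow_exp_sum_mul {ι : Type*} [Fintype ι] [DecidableEq ι] (c : ι → ℂ) :
    ∑ x : ι → Fin 2, exp (∑ j, c j * ((x j : ℕ) : ℂ)) = ∏ j, (1 + exp (c j)) := by
  calc ∑ x : ι → Fin 2, exp (∑ j, c j * ((x j : ℕ) : ℂ))
      = ∑ x : ι → Fin 2, ∏ j, exp (c j * ((x j : ℕ) : ℂ)) := by simp only [Complex.exp_sum]
    _ = ∏ j, ∑ b : Fin 2, exp (c j * ((b : ℕ) : ℂ)) :=
        (Fintype.prod_sum fun j (b : Fin 2) => exp (c j * ((b : ℕ) : ℂ))).symm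
    _ = ∏ j, (1 + exp (c j)) := by simp [Fin.sum_univ_two]

lemma exp_two_pi_I_mul_div_eq_neg_one_iff {a N : ℝ} (hN : N ≠ 0) :
    exp (2 * π * I * a / N) = -1 ↔ ∃ k : ℤ, a = N / 2 + k * N := by
  rw [← exp_pi_mul_I, exp_eq_exp_iff_exists_int]
  refine exists_congr fun k => ?_
  have hπI : (π : ℂ) * I ≠ 0 := by simp [pi_ne_zero]
  have hNC : (N : ℂ) ≠ 0 := ofReal_ne_zero.2 hN
  calc 2 * π * I * a / N = π * I + k * (2 * π * I)
      ↔ (π * I) * (2 * a / N) = (π * I) * (1 + 2 * k) := by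
        constructor <;> intro h <;> linear_combination h
    _ ↔ (2 * a / N : ℂ) = 1 + 2 * k := mul_right_inj' hπI
    _ ↔ a = N / 2 + k * N := by
        rw [← ofReal_inj]; push_cast
        constructor <;> intro h
        · field_simp at h; linear_combination h / 2
        · field_simp; linear_combination 2 * h

theorem generalized_qft_stmt_6_general (n : ℕ) (w : Fin n → ℝ) :
    (1 / (2 : ℂ) ^ n) * (∑ x : Fin n → Fin 2,
        Complex.exp (2 * (Real.pi : ℂ) * Complex.I *
          ((∑ j, w j * ((x j : ℕ) : ℝ) : ℝ) : ℂ) / (2 : ℂ) ^ n)) = 0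
      ↔ ∃ j : Fin n, ∃ k : ℤ, w j = 2 ^ (n - 1) + (k : ℝ) * 2 ^ n := by
  have hN : (2 : ℂ) ^ n = ((2 ^ n : ℝ) : ℂ) := by push_cast; rfl
  have hexponent (x : Fin n → Fin 2) :
      2 * (π : ℂ) * I * ((∑ j, w j * ((x j : ℕ) : ℝ) : ℝ) : ℂ) / (2 : ℂ) ^ n
        = ∑ j, 2 * π * I * w j / (2 ^ n : ℝ) * ((x j : ℕ) : ℂ) := by
    rw [hN, ofReal_sum, mul_sum, sum_div]
    refine sum_congr rfl fun j _ => ?_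
    push_cast; ring
  simp_rw [hexponent, sum_fin_two_pow_exp_sum_mul, mul_eq_zero, one_div, inv_eq_zero,
    pow_eq_zero_iff', prod_eq_zero_iff, add_eq_zero_iff_eq_neg']
  simp only [two_ne_zero, false_and, false_or, mem_univ, true_and]
  refine exists_congr fun j => ?_
  have half : (2 : ℝ) ^ n / 2 = 2 ^ (n - 1) := by
    rw [← pow_sub_one_mul j.pos.ne', mul_div_cancel_right₀ _ two_ne_zero]
  rw [exp_two_pi_I_mul_div_eq_neg_one_iff (by positivity), half]

/-- For `n ≥ 1`, `N = 2^n` and a real vector `w`,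
`(1/N) Σ_{x ∈ {0,1}^n} exp(2πi (Σ_j w_j x_j)/N) = 0` iff there is an index `j` with
`w_j ≡ 2^{n-1} (mod 2^n)`, i.e. `w_j = 2^{n-1} + k·2^n` for some integer `k`. -/
theorem generalized_qft_stmt_6 (n : ℕ) (hn : 1 ≤ n) (w : Fin n → ℝ) :
    (1 / (2 : ℂ) ^ n) * (∑ x : Fin n → Fin 2,
        Complex.exp (2 * (Real.pi : ℂ) * Complex.I *
          ((∑ j, w j * ((x j : ℕ) : ℝ) : ℝ) : ℂ) / (2 : ℂ) ^ n)) = 0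
      ↔ ∃ j : Fin n, ∃ k : ℤ, w j = 2 ^ (n - 1) + (k : ℝ) * 2 ^ n :=
  generalized_qft_stmt_6_general n w
end

section
/- Let n ≥ 1, N = 2^n, let Φ be a real n×n matrix, and suppose the N×N matrix T with (y,x) entry (1/√N) exp(2πi (yΦxᵀ)/N) (x, y ranging over {0,1}^n) is unitary. Then for every r with 1 ≤ r ≤ n and every choice of row indices 0 ≤ i_1 < i_2 < ⋯ < i_r ≤ n-1 there exists a column index 0 ≤ j ≤ n-1 such that φ_{i_1 j} + φ_{i_2 j} + ⋯ + φ_{i_r j} ≡ 2^{n-1} (mod 2^n), i.e., the sum of those r entries of column j equals 2^{n-1} + k·2^n for some integer k. -/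
/-!
Take the row `y` of `T` indexed by the indicator vector of `s`, and the row `0`, which is
constant. Their entries are `a · exp(2πi Σ_j c_j x_j / N)` and `a = 1/√N`, with `c_j = Σ_{i ∈ s} φ_{ij}`,
so summing over `x ∈ {0,1}^n` factorises their inner product as `|a|² ∏_j (1 + exp(2πi c_j / N))`.
Unitarity makes it vanish, so some factor is zero: `exp(2πi c_j / N) = -1`, i.e.
`c_j / N ∈ 1/2 + ℤ`.
-/

open Complex Finset Matrix
open scoped Real

lemma Matrix.sum_mul_star_eq_zero_of_mem_unitaryGroup {ι R : Type*} [Fintype ι] [DecidableEq ι]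
    [CommRing R] [StarRing R] {U : Matrix ι ι R} (hU : U ∈ unitaryGroup ι R) {y z : ι}
    (h : y ≠ z) : ∑ x, U y x * star (U z x) = 0 := by
  have := congrFun (congrFun (mem_unitaryGroup_iff.mp hU) y) z
  rwa [mul_apply, one_apply_ne h] at this

lemma Complex.sum_bits_exp_sum_mul {ι : Type*} [Fintype ι] [DecidableEq ι] (w : ι → ℂ) :
    ∑ x : ι → Fin 2, exp (∑ j, w j * ((x j : ℕ) : ℂ)) = ∏ j, (1 + exp (w j)) := by
  simp only [exp_sum]
  rw [← Fintype.prod_sum fun j (b : Fin 2) => exp (w j * (b : ℕ))]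
  simp [Fin.sum_univ_two]

lemma Complex.exists_int_eq_half_add_of_exp_eq_neg_one {z : ℂ}
    (h : exp (2 * π * I * z) = -1) : ∃ k : ℤ, z = 1 / 2 + k := by
  rw [← exp_pi_mul_I, exp_eq_exp_iff_exists_int] at h
  obtain ⟨k, hk⟩ := h
  refine ⟨k, mul_left_cancel₀ two_pi_I_ne_zero ?_⟩
  linear_combination hk

lemma exists_exp_eq_neg_one_of_mem_unitaryGroup {ι : Type*} [Fintype ι] [DecidableEq ι]
    {T : Matrix (ι → Fin 2) (ι → Fin 2) ℂ} (hT : T ∈ unitaryGroup _ ℂ) {a : ℂ} (ha : a ≠ 0)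
    {w : (ι → Fin 2) → ι → ℂ} (hTw : ∀ y x, T y x = a * exp (∑ j, w y j * ((x j : ℕ) : ℂ)))
    (hw : w 0 = 0) {y : ι → Fin 2} (hy : y ≠ 0) : ∃ j, exp (w y j) = -1 := by
  have horth := sum_mul_star_eq_zero_of_mem_unitaryGroup hT hy
  have hrow0 : ∀ x, T 0 x = a := by simp [hTw, hw]
  simp only [hrow0, hTw, mul_right_comm a, ← mul_sum, sum_bits_exp_sum_mul] at horth
  have hprod : ∏ j, (1 + exp (w y j)) = 0 := by
    simpa [ha] using horth
  obtain ⟨j, -, hj⟩ := prod_eq_zero_iff.mp hprod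
  exact ⟨j, eq_neg_of_add_eq_zero_right hj⟩

theorem generalized_qft_stmt_9_general (n : ℕ)
    (Φ : Matrix (Fin n) (Fin n) ℝ)
    (T : Matrix (Fin n → Fin 2) (Fin n → Fin 2) ℂ)
    (hT : ∀ y x : Fin n → Fin 2,
      T y x = ((1 / Real.sqrt (2 ^ n) : ℝ) : ℂ) *
        Complex.exp (2 * (Real.pi : ℂ) * Complex.I *
          ((∑ i, ∑ j, ((y i : ℕ) : ℝ) * Φ i j * ((x j : ℕ) : ℝ) : ℝ) : ℂ) / (2 : ℂ) ^ n))
    (hunitary : T ∈ Matrix.unitaryGroup (Fin n → Fin 2) ℂ) :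
    ∀ s : Finset (Fin n), s.Nonempty → ∃ j : Fin n, ∃ k : ℤ,
      (∑ i ∈ s, Φ i j) = 2 ^ (n - 1) + (k : ℝ) * 2 ^ n := by
  intro s ⟨i₀, hi₀⟩
  let y : Fin n → Fin 2 := fun i => if i ∈ s then 1 else 0
  have hy : y ≠ 0 := fun h => by simpa [y, hi₀] using congrFun h i₀
  have hrow : ∀ y x : Fin n → Fin 2, T y x = ((1 / Real.sqrt (2 ^ n) : ℝ) : ℂ) *
      exp (∑ j, 2 * π * I * ((∑ i, ((y i : ℕ) : ℝ) * Φ i j : ℝ) : ℂ) / 2 ^ n * ((x j : ℕ) : ℂ)) := by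
    intro y x
    rw [hT, sum_comm]
    push_cast
    simp only [sum_mul, mul_sum, sum_div]
    congr 2
    exact sum_congr rfl fun j _ => sum_congr rfl fun i _ => by ring
  obtain ⟨j, hj⟩ := exists_exp_eq_neg_one_of_mem_unitaryGroup hunitary (by simp) hrow
    (by ext; simp) hy
  rw [mul_div_assoc] at hj
  obtain ⟨k, hk⟩ := exists_int_eq_half_add_of_exp_eq_neg_one hj
  refine ⟨j, k, ?_⟩
  set c : ℝ := ∑ i, ((y i : ℕ) : ℝ) * Φ i j
  have hc : c = (1 / 2 + k) * 2 ^ n :=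
    ofReal_injective (by push_cast; rwa [div_eq_iff (by simp)] at hk)
  have hcs : c = ∑ i ∈ s, Φ i j := by
    simp [c, y, apply_ite (fun b : Fin 2 => ((b : ℕ) : ℝ)), ite_mul]
  have hn : (2 : ℝ) ^ n = 2 * 2 ^ (n - 1) := by
    rw [← pow_succ', Nat.sub_add_cancel (Fin.pos j)]
  rw [← hcs, hc, hn]
  ring

/-- Let `Φ` be a real `n×n` matrix such that the `2^n × 2^n` matrix `T`
with `(y,x)` entry `(1/√N) exp(2πi (yΦxᵀ)/N)` is unitary. Then for every nonempty set of
row indices `i_1 < ⋯ < i_r` (a nonempty `s : Finset (Fin n)`) there is a column `j` with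
`Σ_{i ∈ s} φ_{ij} ≡ 2^{n-1} (mod 2^n)`. -/
theorem generalized_qft_stmt_9 (n : ℕ) (hn : 1 ≤ n)
    (Φ : Matrix (Fin n) (Fin n) ℝ)
    (T : Matrix (Fin n → Fin 2) (Fin n → Fin 2) ℂ)
    (hT : ∀ y x : Fin n → Fin 2,
      T y x = ((1 / Real.sqrt (2 ^ n) : ℝ) : ℂ) *
        Complex.exp (2 * (Real.pi : ℂ) * Complex.I *
          ((∑ i, ∑ j, ((y i : ℕ) : ℝ) * Φ i j * ((x j : ℕ) : ℝ) : ℝ) : ℂ) / (2 : ℂ) ^ n))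
    (hunitary : T ∈ Matrix.unitaryGroup (Fin n → Fin 2) ℂ) :
    ∀ s : Finset (Fin n), s.Nonempty → ∃ j : Fin n, ∃ k : ℤ,
      (∑ i ∈ s, Φ i j) = 2 ^ (n - 1) + (k : ℝ) * 2 ^ n :=
  generalized_qft_stmt_9_general n Φ T hT hunitary
end

section
/- Let n ≥ 1, N = 2^n, and for every pair 0 ≤ k < j ≤ n-1 let θ_{jk} : {0,1} → R be an arbitrary function. For a bit vector x ∈ {0,1}^n set Θ_j(x) = θ_{j0}(x_0) + θ_{j1}(x_1) + ⋯ + θ_{j,j-1}(x_{j-1}) for 1 ≤ j ≤ n-1. Then the N×N real matrix M with (y,x) entry (1/√N)·(-1)^{Σ_{j=0}^{n-1} x_j y_j}·Π_{j=1}^{n-1}[cos Θ_j(x) + (-1)^{x_j + y_j} sin Θ_j(x)] is unitary (equivalently, orthogonal). -/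
/-!
Each entry is `2^{-n/2}` times a product over the qubits `j` of a factor that depends on the
column `x` only through `x_0, …, x_j`, and on `x_j` only through the `2 × 2` pattern
`(-1)^{x_j y_j} (cos Θ_j + (-1)^{x_j + y_j} sin Θ_j)`, since `Θ_j` does not involve `x_j`.
Summing the product of two rows over `x` one bit at a time, last bit first, each bit contributes
the inner product of two rows of that pattern, which is `2 δ_{y_j y'_j}` because
`cos² + sin² = 1`.
-/

open Finset

theorem Fin.snoc_eq_snoc_of_le_castSucc {α : Type*} {n : ℕ} {q q' : Fin n → α} {i : Fin n}
    (h : ∀ k ≤ i, q k = q' k) (b b' : α) :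
    ∀ k ≤ i.castSucc,
      Fin.snoc (α := fun _ => α) q b k = Fin.snoc (α := fun _ => α) q' b' k := by
  intro k hk
  obtain ⟨k, rfl⟩ := Fin.exists_castSucc_eq.2 (hk.trans_lt i.castSucc_lt_last).ne
  simpa using h k (by simpa using hk)

theorem Fintype.sum_prod_eq_prod_of_dependsOn_Iic {R α : Type*} [CommSemiring R] [Fintype α]
    [Nonempty α] {n : ℕ} (g : Fin n → (Fin n → α) → R) (a : Fin n → R)
    (hg : ∀ j, DependsOn (g j) (Set.Iic j))
    (hsum : ∀ j x, ∑ b, g j (Function.update x j b) = a j) :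
    ∑ x, ∏ j, g j x = ∏ j, a j := by
  induction n with
  | zero => simp
  | succ n ih =>
    obtain ⟨b₀⟩ := ‹Nonempty α›
    have hinit (q : Fin n → α) (b : α) : ∏ i : Fin n, g i.castSucc (Fin.snoc q b) =
        ∏ i : Fin n, g i.castSucc (Fin.snoc q b₀) :=
      Fintype.prod_congr _ _ fun i =>
        hg _ (Fin.snoc_eq_snoc_of_le_castSucc (fun _ _ => rfl) b b₀)
    have hlast (q : Fin n → α) : ∑ b, g (Fin.last n) (Fin.snoc q b) = a (Fin.last n) := by
      simpa [Fin.update_snoc_last] using hsum (Fin.last n) (Fin.snoc q b₀)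
    have hprefix : ∑ q : Fin n → α, ∏ i : Fin n, g i.castSucc (Fin.snoc q b₀) =
        ∏ i : Fin n, a i.castSucc :=
      ih _ _ (fun i _ _ h => hg _ (Fin.snoc_eq_snoc_of_le_castSucc h b₀ b₀))
        (fun i q => by simpa [Fin.snoc_update] using hsum i.castSucc (Fin.snoc q b₀))
    calc ∑ x, ∏ j, g j x
        = ∑ q : Fin n → α, ∑ b, (∏ i : Fin n, g i.castSucc (Fin.snoc q b)) *
            g (Fin.last n) (Fin.snoc q b) := by
          rw [← (Fin.snocEquiv fun _ => α).sum_comp, Fintype.sum_prod_type_right]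
          simp only [Fin.prod_univ_castSucc]; rfl
      _ = ∏ j, a j := by
          simp_rw [hinit, ← mul_sum, hlast, ← sum_mul, hprefix, Fin.prod_univ_castSucc]

/-- The factor of qubit `j` in the `(y, x)` entry, with `c = cos Θ_j(x)`, `s = sin Θ_j(x)`,
`b = x_j`. -/
def bitFactor {R : Type*} [CommRing R] (c s : R) (y b : Fin 2) : R :=
  (-1) ^ ((b : ℕ) * y) * (c + (-1) ^ ((b : ℕ) + y) * s)

theorem sum_bitFactor_mul_bitFactor {R : Type*} [CommRing R] {c s : R} (h : c ^ 2 + s ^ 2 = 1)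
    (y y' : Fin 2) :
    ∑ b, bitFactor c s y b * bitFactor c s y' b = if y = y' then 2 else 0 := by
  fin_cases y <;> fin_cases y' <;> simp [bitFactor, Fin.sum_univ_two] <;>
    first | linear_combination 2 * h | ring

theorem sum_prod_bitFactor_mul_bitFactor {n : ℕ} (Θ : Fin n → (Fin n → Fin 2) → ℝ)
    (hΘ : ∀ j, DependsOn (Θ j) (Set.Iio j)) (y y' : Fin n → Fin 2) :
    ∑ x, ∏ j, bitFactor (Real.cos (Θ j x)) (Real.sin (Θ j x)) (y j) (x j) *
        bitFactor (Real.cos (Θ j x)) (Real.sin (Θ j x)) (y' j) (x j) =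
      if y = y' then 2 ^ n else 0 := by
  rw [Fintype.sum_prod_eq_prod_of_dependsOn_Iic _ (fun j => if y j = y' j then 2 else 0),
    prod_ite_zero, prod_const, card_univ, Fintype.card_fin]
  · simp [funext_iff]
  · intro j x x' h
    simp only [(hΘ j).mono Set.Iio_subset_Iic_self h, h j (Set.mem_Iic.2 le_rfl)]
  · intro j x
    have hupdate (b : Fin 2) : Θ j (Function.update x j b) = Θ j x :=
      hΘ j fun _ hk => Function.update_of_ne (Set.mem_Iio.1 hk).ne _ _
    simpa [hupdate] using
      sum_bitFactor_mul_bitFactor (Real.cos_sq_add_sin_sq (Θ j x)) (y j) (y' j)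

theorem mem_unitaryGroup_of_apply_eq_prod_bitFactor {n : ℕ}
    (Θ : Fin n → (Fin n → Fin 2) → ℝ) (hΘ : ∀ j, DependsOn (Θ j) (Set.Iio j))
    (M : Matrix (Fin n → Fin 2) (Fin n → Fin 2) ℝ)
    (hM : ∀ y x, M y x = (Real.sqrt (2 ^ n))⁻¹ *
      ∏ j, bitFactor (Real.cos (Θ j x)) (Real.sin (Θ j x)) (y j) (x j)) :
    M ∈ Matrix.unitaryGroup (Fin n → Fin 2) ℝ := by
  have hnorm : (Real.sqrt (2 ^ n))⁻¹ * (Real.sqrt (2 ^ n))⁻¹ = (2 ^ n : ℝ)⁻¹ := by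
    rw [← mul_inv, Real.mul_self_sqrt (by positivity)]
  rw [Matrix.mem_unitaryGroup_iff]
  ext y y'
  simp only [Matrix.mul_apply, Matrix.star_apply, star_trivial, hM, Matrix.one_apply]
  have hdiag : (if y = y' then (1 : ℝ) else 0) = (2 ^ n)⁻¹ * if y = y' then 2 ^ n else 0 := by
    split_ifs <;> simp
  rw [hdiag, ← sum_prod_bitFactor_mul_bitFactor Θ hΘ, mul_sum, ← hnorm]
  exact sum_congr rfl fun x _ => by rw [prod_mul_distrib]; ring

def prefixAngle {n : ℕ} (θ : Fin n → Fin n → Fin 2 → ℝ) (j : Fin n)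
    (x : Fin n → Fin 2) : ℝ :=
  ∑ k ∈ univ.filter (fun k : Fin n => (k : ℕ) < j), θ j k (x k)

theorem prefixAngle_dependsOn {n : ℕ} (θ : Fin n → Fin n → Fin 2 → ℝ) (j : Fin n) :
    DependsOn (prefixAngle θ j) (Set.Iio j) := fun x x' h =>
  sum_congr rfl fun k hk => by rw [h k (mem_filter.1 hk).2]

theorem prefixAngle_eq_zero {n : ℕ} (θ : Fin n → Fin n → Fin 2 → ℝ) {j : Fin n}
    (hj : (j : ℕ) = 0) (x : Fin n → Fin 2) : prefixAngle θ j x = 0 :=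
  sum_eq_zero fun k hk => by simp [hj] at hk

theorem generalized_qft_stmt_11_general (n : ℕ)
    (θ : Fin n → Fin n → Fin 2 → ℝ)
    (M : Matrix (Fin n → Fin 2) (Fin n → Fin 2) ℝ)
    (hM : ∀ y x : Fin n → Fin 2,
      M y x = (1 / Real.sqrt (2 ^ n)) * (-1 : ℝ) ^ (∑ j : Fin n, (x j : ℕ) * (y j : ℕ)) *
        ∏ j ∈ Finset.univ.filter (fun j : Fin n => 1 ≤ (j : ℕ)),
          (Real.cos (∑ k ∈ Finset.univ.filter (fun k : Fin n => (k : ℕ) < (j : ℕ)),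
              θ j k (x k)) +
            (-1 : ℝ) ^ ((x j : ℕ) + (y j : ℕ)) *
              Real.sin (∑ k ∈ Finset.univ.filter (fun k : Fin n => (k : ℕ) < (j : ℕ)),
                θ j k (x k)))) :
    M ∈ Matrix.unitaryGroup (Fin n → Fin 2) ℝ := by
  refine mem_unitaryGroup_of_apply_eq_prod_bitFactor _ (prefixAngle_dependsOn θ) M
    fun y x => ?_
  simp only [← prefixAngle.eq_1] at hM
  -- the factor `j = 0` dropped by the filter is `cos 0 ± sin 0 = 1`
  rw [hM, prod_filter_of_ne fun j _ hj => ?_]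
  · simp [bitFactor, prod_mul_distrib, ← prod_pow_eq_pow_sum, mul_assoc]
  · contrapose! hj
    rw [prefixAngle_eq_zero θ (by omega)]
    simp

/-- Given arbitrary functions `θ_{jk} : {0,1} → ℝ` for `0 ≤ k < j ≤ n-1`,
set `Θ_j(x) = Σ_{k<j} θ_{jk}(x_k)`. Then the real `2^n × 2^n` matrix with `(y,x)` entry
`(1/√N)·(-1)^{Σ_j x_j y_j}·Π_{j=1}^{n-1}[cos Θ_j(x) + (-1)^{x_j+y_j} sin Θ_j(x)]`
is unitary (orthogonal). -/
theorem generalized_qft_stmt_11 (n : ℕ) (hn : 1 ≤ n)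
    (θ : Fin n → Fin n → Fin 2 → ℝ)
    (M : Matrix (Fin n → Fin 2) (Fin n → Fin 2) ℝ)
    (hM : ∀ y x : Fin n → Fin 2,
      M y x = (1 / Real.sqrt (2 ^ n)) * (-1 : ℝ) ^ (∑ j : Fin n, (x j : ℕ) * (y j : ℕ)) *
        ∏ j ∈ Finset.univ.filter (fun j : Fin n => 1 ≤ (j : ℕ)),
          (Real.cos (∑ k ∈ Finset.univ.filter (fun k : Fin n => (k : ℕ) < (j : ℕ)),
              θ j k (x k)) +
            (-1 : ℝ) ^ ((x j : ℕ) + (y j : ℕ)) *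
              Real.sin (∑ k ∈ Finset.univ.filter (fun k : Fin n => (k : ℕ) < (j : ℕ)),
                θ j k (x k)))) :
    M ∈ Matrix.unitaryGroup (Fin n → Fin 2) ℝ :=
  generalized_qft_stmt_11_general n θ M hM
end

section
/- Let n ≥ 1, N = 2^n, and for every pair 0 ≤ k ≤ j ≤ n-1 let θ_{jk} : {0,1} → R be a function satisfying θ_{jj}(1) = θ_{jj}(0) - π/2 for every j. For a bit vector x ∈ {0,1}^n set Ψ_j(x) = θ_{j0}(x_0) + θ_{j1}(x_1) + ⋯ + θ_{jj}(x_j) for 0 ≤ j ≤ n-1. Then the N×N real matrix M with (y,x) entry Π_{j=0}^{n-1} cos(Ψ_j(x) + π y_j / 2) is unitary (equivalently, orthogonal). -/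
/-!
Summing over `y` coordinatewise, `cos (a + π b/2) cos (c + π b/2)` over `b ∈ {0,1}` gives
`cos (a - c)`, so the Gram entry `(MᵀM)_{x x'}` equals `∏_j cos (Ψ_j x - Ψ_j x')`. For `x ≠ x'`,
at the first index `j` where `x` and `x'` differ the phases `Ψ_j x` and `Ψ_j x'` differ only in
their diagonal term, by `±π/2`, so that factor vanishes.
-/

open Real Finset

lemma sum_fin_two_cos_add_mul_cos_add (a c : ℝ) :
    ∑ b : Fin 2, cos (a + π * (b : ℕ) / 2) * cos (c + π * (b : ℕ) / 2) = cos (a - c) := by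
  simp [Fin.sum_univ_two, cos_add_pi_div_two, cos_sub]

lemma sum_prod_cos_mul_prod_cos {ι : Type*} [Fintype ι] [DecidableEq ι] (u v : ι → ℝ) :
    ∑ y : ι → Fin 2, (∏ j, cos (u j + π * (y j : ℕ) / 2)) * ∏ j, cos (v j + π * (y j : ℕ) / 2) =
      ∏ j, cos (u j - v j) := by
  simp only [← prod_mul_distrib, ← sum_fin_two_cos_add_mul_cos_add]
  rw [prod_univ_sum, Fintype.piFinset_univ]

lemma exists_sum_Iic_sub_sum_Iic_eq {ι α : Type*} [LinearOrder ι] [Fintype ι]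
    [LocallyFiniteOrderBot ι] (f : ι → ι → α → ℝ) {x x' : ι → α} (h : x ≠ x') :
    ∃ j, x j ≠ x' j ∧
      ∑ k ∈ Iic j, f j k (x k) - ∑ k ∈ Iic j, f j k (x' k) = f j j (x j) - f j j (x' j) := by
  classical
  obtain ⟨j, hj, hmin⟩ := exists_min_image {k | x k ≠ x' k} id
    (by simpa [Finset.Nonempty, Function.ne_iff] using h)
  refine ⟨j, (mem_filter.1 hj).2, ?_⟩
  have hlt : ∀ k ∈ Iio j, f j k (x k) = f j k (x' k) := fun k hk => by
    by_contra hne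
    exact (mem_Iio.1 hk).not_ge (hmin k (mem_filter.2 ⟨mem_univ _, fun e => hne (by rw [e])⟩))
  rw [← add_sum_Iio_eq_sum_Iic, ← add_sum_Iio_eq_sum_Iic, sum_congr rfl hlt]
  ring

lemma cos_sub_eq_zero_of_ne {t : Fin 2 → ℝ} (ht : t 1 = t 0 - π / 2) {a b : Fin 2}
    (hab : a ≠ b) : cos (t a - t b) = 0 := by
  fin_cases a <;> fin_cases b <;> simp_all [sub_sub_cancel, ← neg_sub (t 0)]

theorem generalized_qft_stmt_12_general (n : ℕ)
    (θ : Fin n → Fin n → Fin 2 → ℝ)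
    (hθ : ∀ j : Fin n, θ j j 1 = θ j j 0 - Real.pi / 2)
    (M : Matrix (Fin n → Fin 2) (Fin n → Fin 2) ℝ)
    (hM : ∀ y x : Fin n → Fin 2,
      M y x = ∏ j : Fin n,
        Real.cos ((∑ k ∈ Finset.univ.filter (fun k : Fin n => (k : ℕ) ≤ (j : ℕ)),
            θ j k (x k)) + Real.pi * (y j : ℕ) / 2)) :
    M ∈ Matrix.unitaryGroup (Fin n → Fin 2) ℝ := by
  rw [Matrix.mem_unitaryGroup_iff']
  ext x x'
  simp only [Matrix.mul_apply, Matrix.star_apply, star_trivial, hM, Fin.val_fin_le,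
    filter_ge_eq_Iic, sum_prod_cos_mul_prod_cos]
  by_cases hx : x = x'
  · subst hx; simp
  · obtain ⟨j, hj, hsub⟩ := exists_sum_Iic_sub_sum_Iic_eq θ hx
    rw [Matrix.one_apply_ne hx]
    exact prod_eq_zero (mem_univ j) (hsub ▸ cos_sub_eq_zero_of_ne (hθ j) hj)

/-- Given functions `θ_{jk} : {0,1} → ℝ` for `0 ≤ k ≤ j ≤ n-1` with
`θ_{jj}(1) = θ_{jj}(0) - π/2`, set `Ψ_j(x) = Σ_{k≤j} θ_{jk}(x_k)`. Then the real
`2^n × 2^n` matrix with `(y,x)` entry `Π_j cos(Ψ_j(x) + π y_j / 2)` is unitary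
(orthogonal). -/
theorem generalized_qft_stmt_12 (n : ℕ) (hn : 1 ≤ n)
    (θ : Fin n → Fin n → Fin 2 → ℝ)
    (hθ : ∀ j : Fin n, θ j j 1 = θ j j 0 - Real.pi / 2)
    (M : Matrix (Fin n → Fin 2) (Fin n → Fin 2) ℝ)
    (hM : ∀ y x : Fin n → Fin 2,
      M y x = ∏ j : Fin n,
        Real.cos ((∑ k ∈ Finset.univ.filter (fun k : Fin n => (k : ℕ) ≤ (j : ℕ)),
            θ j k (x k)) + Real.pi * (y j : ℕ) / 2)) :
    M ∈ Matrix.unitaryGroup (Fin n → Fin 2) ℝ :=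
  generalized_qft_stmt_12_general n θ hθ M hM
end

section
/- For every n ≥ 1 and every bit vector x = (x_0,…,x_{n-1}) ∈ {0,1}^n, the Haar matrix A_{2^n} satisfies A_{2^n} e_x = e_0 + Σ_{i=0}^{n-1} (-1)^{x_i} e_{r_i(x)}, where e_x denotes the standard basis vector indexed by the big-endian integer Σ_k x_k 2^{n-1-k}, e_0 is the basis vector of index 0, and r_i(x) = 2^i + Σ_{k=0}^{i-1} x_k 2^{i-1-k} is the big-endian index of the bit string 0^{n-i-1} 1 x_0 ⋯ x_{i-1}. -/
/-!
Induct on `n`, splitting off the last bit: for `x = (x', b)` the column index is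
`2 · enc(x') + b`. The top half of `A_{2^{n+1}}` reads column `enc(x')` of `A_{2^n}`, which
gives `e_0` and the terms `r_i(x) = r_i(x')` for `i < n`, all of them `< 2^n`; the bottom half
`I ⊗ (1, -1)` contributes the single entry `(-1)^b` in row `2^n + enc(x') = r_n(x)`.
-/

/-- Each row of bits `x ∈ {0,1}^m`, read big-endian as `Σ_k x_k 2^{m-1-k}`,
is an integer `< 2^m`. -/
theorem sum_bits_lt (m : ℕ) (x : Fin m → Fin 2) :
    (∑ k : Fin m, (x k : ℕ) * 2 ^ (m - 1 - (k : ℕ))) < 2 ^ m := by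
  have h2 : ∀ t : ℕ, ∑ j ∈ Finset.range t, 2 ^ j = 2 ^ t - 1 := by
    intro t
    induction t with
    | zero => simp
    | succ t ih =>
      rw [Finset.sum_range_succ, ih]
      have h1 : 1 ≤ 2 ^ t := Nat.one_le_two_pow
      have h3 : 2 ^ (t + 1) = 2 ^ t * 2 := pow_succ 2 t
      omega
  calc (∑ k : Fin m, (x k : ℕ) * 2 ^ (m - 1 - (k : ℕ)))
      ≤ ∑ k : Fin m, 1 * 2 ^ (m - 1 - (k : ℕ)) :=
        Finset.sum_le_sum (fun k _ => Nat.mul_le_mul_right _ (by have := (x k).isLt; omega))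
    _ = ∑ j ∈ Finset.range m, 2 ^ (m - 1 - j) := by
        rw [Finset.sum_range (fun j => 2 ^ (m - 1 - j))]
        simp
    _ = ∑ j ∈ Finset.range m, 2 ^ j := Finset.sum_range_reflect (fun j => 2 ^ j) m
    _ = 2 ^ m - 1 := h2 m
    _ < 2 ^ m := by have : 1 ≤ 2 ^ m := Nat.one_le_two_pow; omega

/-- Big-endian encoding of a bit string as an index in `Fin (2^m)`. -/
def bitEnc {m : ℕ} (x : Fin m → Fin 2) : Fin (2 ^ m) :=
  ⟨∑ k : Fin m, (x k : ℕ) * 2 ^ (m - 1 - (k : ℕ)), sum_bits_lt m x⟩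

/-- The big-endian index `r_i(b) = 2^i + Σ_{k<i} b_k 2^{i-1-k}` of the bit string
`0^{n-i-1} 1 b_0 ⋯ b_{i-1}`. -/
def rIdx {n : ℕ} (i : Fin n) (b : Fin (i : ℕ) → Fin 2) : Fin (2 ^ n) :=
  ⟨2 ^ (i : ℕ) + ∑ k : Fin (i : ℕ), (b k : ℕ) * 2 ^ ((i : ℕ) - 1 - (k : ℕ)), by
    have h1 := sum_bits_lt (i : ℕ) b
    have h2 : 2 ^ ((i : ℕ) + 1) ≤ 2 ^ n := Nat.pow_le_pow_right (by norm_num) i.isLt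
    have h3 : 2 ^ ((i : ℕ) + 1) = 2 ^ (i : ℕ) * 2 := pow_succ 2 _
    omega⟩

/-- The Haar matrices, defined recursively by `A_{2^0} = (1)`,
`A_{2^{n+1}} = [A_{2^n} ⊗ (1,1) ; I_{2^n} ⊗ (1,-1)]`, with rows and columns indexed
big-endian (so column `c` decomposes as `(c / 2, c % 2)`). In particular
`A_2 = [[1,1],[1,-1]]`. -/
def haarA : (n : ℕ) → Matrix (Fin (2 ^ n)) (Fin (2 ^ n)) ℝ
  | 0 => 1
  | n + 1 => Matrix.of fun r c =>
      if hr : (r : ℕ) < 2 ^ n then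
        haarA n ⟨(r : ℕ), hr⟩ ⟨(c : ℕ) / 2, by
          have h := c.isLt
          have h3 : 2 ^ (n + 1) = 2 ^ n * 2 := pow_succ 2 n
          omega⟩
      else
        if (c : ℕ) / 2 = (r : ℕ) - 2 ^ n then (if (c : ℕ) % 2 = 0 then 1 else -1) else 0

lemma bitEnc_val_eq (n : ℕ) (x : Fin (n + 1) → Fin 2) :
    (bitEnc x : ℕ) = 2 * bitEnc (Fin.init x) + x (Fin.last n) := by
  simp only [bitEnc, Fin.sum_univ_castSucc, Fin.val_last, Fin.val_castSucc, Fin.init,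
    add_tsub_cancel_right, tsub_self, pow_zero, mul_one, Finset.mul_sum]
  congr 1
  refine Finset.sum_congr rfl fun k _ => ?_
  rw [show n - k = n - 1 - k + 1 by omega, pow_succ]
  ring

lemma rIdx_castSucc_val {n : ℕ} (x : Fin (n + 1) → Fin 2) (i : Fin n) :
    (rIdx i.castSucc (fun k : Fin i.castSucc => x ⟨k, k.isLt.trans i.castSucc.isLt⟩) : ℕ) =
      rIdx i (fun k : Fin i => Fin.init x ⟨k, k.isLt.trans i.isLt⟩) :=
  rfl

lemma rIdx_last_val {n : ℕ} (x : Fin (n + 1) → Fin 2) :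
    (rIdx (Fin.last n) (fun k : Fin (Fin.last n) => x ⟨k, k.isLt.trans (Fin.last n).isLt⟩) : ℕ) =
      2 ^ n + bitEnc (Fin.init x) :=
  rfl

section

variable {n : ℕ} (x : Fin (n + 1) → Fin 2) (r : Fin (2 ^ (n + 1)))

lemma haarA_succ_bitEnc_of_lt (hr : (r : ℕ) < 2 ^ n) :
    haarA (n + 1) r (bitEnc x) = haarA n ⟨r, hr⟩ (bitEnc (Fin.init x)) := by
  have hc := bitEnc_val_eq n x
  simp only [haarA, Matrix.of_apply, dif_pos hr]
  congr 1
  ext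
  dsimp only
  omega

lemma haarA_succ_bitEnc_of_le (hr : 2 ^ n ≤ (r : ℕ)) :
    haarA (n + 1) r (bitEnc x) =
      (-1 : ℝ) ^ (x (Fin.last n) : ℕ) *
        if (r : ℕ) = 2 ^ n + bitEnc (Fin.init x) then 1 else 0 := by
  have hc := bitEnc_val_eq n x
  have hb := (x (Fin.last n)).isLt
  simp only [haarA, Matrix.of_apply, dif_neg (not_lt.mpr hr)]
  rw [show (bitEnc x : ℕ) / 2 = bitEnc (Fin.init x) by omega,
    show (bitEnc x : ℕ) % 2 = x (Fin.last n) by omega]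
  simp only [show (bitEnc (Fin.init x) : ℕ) = r - 2 ^ n ↔ (r : ℕ) = 2 ^ n + bitEnc (Fin.init x)
    by omega]
  obtain h | h : (x (Fin.last n) : ℕ) = 0 ∨ (x (Fin.last n) : ℕ) = 1 := by omega
  all_goals simp [h]

end

theorem haar_stmt_13_general (n : ℕ) (x : Fin n → Fin 2) (r : Fin (2 ^ n)) :
    haarA n r (bitEnc x) =
      (if r = (⟨0, Nat.two_pow_pos n⟩ : Fin (2 ^ n)) then 1 else 0) +
        ∑ i : Fin n, (-1 : ℝ) ^ ((x i : ℕ)) *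
          (if r = rIdx i (fun k : Fin (i : ℕ) => x ⟨(k : ℕ), k.isLt.trans i.isLt⟩)
            then 1 else 0) := by
  induction n with
  | zero => simp [haarA, Matrix.one_apply, Fin.ext_iff]
  | succ n ih =>
    rcases lt_or_ge (r : ℕ) (2 ^ n) with hr | hr
    · have hlast : (r : ℕ) ≠ 2 ^ n + bitEnc (Fin.init x) := by omega
      rw [haarA_succ_bitEnc_of_lt x r hr, ih]
      simp only [Fin.sum_univ_castSucc, Fin.ext_iff, rIdx_castSucc_val, rIdx_last_val, hlast,
        if_false, mul_zero, add_zero]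
      -- the two sides differ only in their `Decidable` instances
      rfl
    · have hzero : (r : ℕ) ≠ 0 := (Nat.two_pow_pos n).trans_le hr |>.ne'
      have hlow (i : Fin n) :
          (r : ℕ) ≠ rIdx i fun k : Fin i => Fin.init x ⟨k, k.isLt.trans i.isLt⟩ :=
        ((rIdx i _).isLt.trans_le hr).ne'
      rw [haarA_succ_bitEnc_of_le x r hr]
      simp only [Fin.sum_univ_castSucc, Fin.ext_iff, rIdx_castSucc_val, rIdx_last_val, hzero,
        hlow, if_false, mul_zero, Finset.sum_const_zero, zero_add]
      rfl

/-- For every `n ≥ 1` and bit vector `x ∈ {0,1}^n`, the Haar matrix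
satisfies `A_{2^n} e_x = e_0 + Σ_{i=0}^{n-1} (-1)^{x_i} e_{r_i(x)}`, where `r_i(x)` is the
big-endian index of the bit string `0^{n-i-1} 1 x_0 ⋯ x_{i-1}`. -/
theorem haar_stmt_13 (n : ℕ) (hn : 1 ≤ n) (x : Fin n → Fin 2) (r : Fin (2 ^ n)) :
    haarA n r (bitEnc x) =
      (if r = (⟨0, Nat.two_pow_pos n⟩ : Fin (2 ^ n)) then 1 else 0) +
        ∑ i : Fin n, (-1 : ℝ) ^ ((x i : ℕ)) *
          (if r = rIdx i (fun k : Fin (i : ℕ) => x ⟨(k : ℕ), k.isLt.trans i.isLt⟩)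
            then 1 else 0) :=
  haar_stmt_13_general n x r
end

section
/- For every n ≥ 1, the real 2^n × 2^n matrix P_{2^n} defined entrywise as follows is unitary (orthogonal): for a column indexed by the bit vector x = (x_0,…,x_{n-1}) ∈ {0,1}^n (big-endian index Σ_k x_k 2^{n-1-k}), the entry in row 0 is 1/√(2^n); the entry in row r_i(b) = 2^i + Σ_{k<i} b_k 2^{i-1-k} (for 0 ≤ i ≤ n-1 and b ∈ {0,1}^i) is (-1)^{x_i} √(2^i)/√(2^n) if (x_0,…,x_{i-1}) = b, and 0 otherwise. Equivalently, P_{2^n} e_x = (1/√(2^n)) (e_0 + Σ_{i=0}^{n-1} (-1)^{x_i} √(2^i) e_{r_i(x)}). -/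
/-! Index the rows by `Option (Σ i : Fin n, Fin i → Fin 2)`: `none` is row `0` and `⟨i, b⟩`
is row `r_i(b)`. In the level-`i` rows, column `x` is supported on the single row
`b = (x_0, …, x_{i-1})`, so `2^n` times the inner product of columns `x` and `y` is
`1 + Σ_i w_i`, where `w_i = ±2^i` (sign `+` iff `x_i = y_i`) when `x` and `y` agree below `i`,
and `w_i = 0` otherwise. Peeling off the last coordinate shows `1 + Σ_i w_i = 2^n` if `x = y`
and `0` otherwise. -/

open Finset

theorem bitEnc_eq_finFunctionFinEquiv {m : ℕ} (x : Fin m → Fin 2) :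
    bitEnc x = finFunctionFinEquiv (x ∘ Fin.rev) := by
  ext
  rw [finFunctionFinEquiv_apply]
  refine Fintype.sum_equiv Fin.revPerm _ _ fun k => ?_
  simp only [Fin.revPerm_apply, Function.comp_apply, Fin.rev_rev, Fin.val_rev]
  congr 2
  omega

theorem bitEnc_injective {m : ℕ} : Function.Injective (bitEnc (m := m)) := fun x y h => by
  rw [bitEnc_eq_finFunctionFinEquiv, bitEnc_eq_finFunctionFinEquiv] at h
  exact Fin.rev_surjective.injective_comp_right (finFunctionFinEquiv.injective h)

theorem bitEnc_bijective {m : ℕ} : Function.Bijective (bitEnc (m := m)) :=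
  (Fintype.bijective_iff_injective_and_card _).2 ⟨bitEnc_injective, by simp⟩

theorem val_rIdx {n : ℕ} (i : Fin n) (b : Fin i → Fin 2) :
    (rIdx i b : ℕ) = 2 ^ (i : ℕ) + bitEnc b := rfl

theorem log_rIdx {n : ℕ} (i : Fin n) (b : Fin i → Fin 2) : Nat.log 2 (rIdx i b) = i := by
  have := (bitEnc b).isLt
  exact Nat.log_eq_of_pow_le_of_lt_pow (by rw [val_rIdx]; omega)
    (by rw [val_rIdx, pow_succ]; omega)

def haarRow (n : ℕ) : Option (Σ i : Fin n, Fin i → Fin 2) → Fin (2 ^ n)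
  | none => ⟨0, Nat.two_pow_pos n⟩
  | some ⟨i, b⟩ => rIdx i b

theorem haarRow_injective (n : ℕ) : Function.Injective (haarRow n) := by
  rintro (_ | ⟨i, b⟩) (_ | ⟨i', b'⟩) h <;> have h := congrArg Fin.val h
  · rfl
  · simp only [haarRow, val_rIdx] at h; omega
  · simp only [haarRow, val_rIdx] at h; omega
  · obtain rfl : i = i' :=
      Fin.ext (by rw [← log_rIdx i b, ← log_rIdx i' b']; exact congrArg _ h)
    simp only [haarRow, val_rIdx, Nat.add_left_cancel_iff, Fin.val_inj] at h
    rw [bitEnc_injective h]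

theorem card_haarRow_domain (n : ℕ) :
    Fintype.card (Option (Σ i : Fin n, Fin i → Fin 2)) = 2 ^ n := by
  simp only [Fintype.card_option, Fintype.card_sigma, Fintype.card_fun, Fintype.card_fin]
  rw [Fin.sum_univ_eq_sum_range (2 ^ ·) n, Nat.geomSum_eq le_rfl]
  have := Nat.one_le_two_pow (n := n)
  omega

theorem haarRow_bijective (n : ℕ) : Function.Bijective (haarRow n) :=
  (Fintype.bijective_iff_injective_and_card _).2
    ⟨haarRow_injective n, by rw [card_haarRow_domain, Fintype.card_fin]⟩

theorem sum_fin_two_pow_eq_sum_rIdx {M : Type*} [AddCommMonoid M] (n : ℕ)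
    (f : Fin (2 ^ n) → M) :
    ∑ r, f r = f ⟨0, Nat.two_pow_pos n⟩ + ∑ i : Fin n, ∑ b : Fin i → Fin 2, f (rIdx i b) := by
  rw [← (Equiv.ofBijective _ (haarRow_bijective n)).sum_comp, Fintype.sum_option,
    Fintype.sum_sigma]
  rfl

theorem neg_one_pow_mul_neg_one_pow_fin_two {R : Type*} [Ring R] (a c : Fin 2) :
    (-1 : R) ^ (a : ℕ) * (-1) ^ (c : ℕ) = if a = c then 1 else -1 := by
  fin_cases a <;> fin_cases c <;> simp

section PrefixAgreeWeight

variable {α R : Type*} [DecidableEq α] [Ring R]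

def prefixAgreeWeight {n : ℕ} (x y : Fin n → α) (i : Fin n) : R :=
  if ∀ k < i, x k = y k then (if x i = y i then 2 ^ (i : ℕ) else -2 ^ (i : ℕ)) else 0

theorem prefixAgreeWeight_castSucc {n : ℕ} (x y : Fin (n + 1) → α) (i : Fin n) :
    (prefixAgreeWeight x y i.castSucc : R) = prefixAgreeWeight (Fin.init x) (Fin.init y) i := by
  refine if_congr
    ⟨fun h k hk => h _ (Fin.castSucc_lt_castSucc_iff.2 hk), fun h k hk => ?_⟩ rfl rfl
  obtain ⟨k, rfl⟩ := Fin.exists_castSucc_eq.2 (hk.trans (Fin.castSucc_lt_last i)).ne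
  exact h k (Fin.castSucc_lt_castSucc_iff.1 hk)

theorem prefixAgreeWeight_last {n : ℕ} (x y : Fin (n + 1) → α) :
    (prefixAgreeWeight x y (Fin.last n) : R) =
      if Fin.init x = Fin.init y then
        (if x (Fin.last n) = y (Fin.last n) then 2 ^ n else -2 ^ n) else 0 := by
  refine if_congr
    ⟨fun h => funext fun k => h _ (Fin.castSucc_lt_last k), fun h k hk => ?_⟩ rfl rfl
  obtain ⟨k, rfl⟩ := Fin.exists_castSucc_eq.2 hk.ne
  exact congrFun h k

theorem one_add_sum_prefixAgreeWeight {n : ℕ} (x y : Fin n → α) :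
    1 + ∑ i, (prefixAgreeWeight x y i : R) = if x = y then 2 ^ n else 0 := by
  induction n with
  | zero => simp [Subsingleton.elim x y]
  | succ n ih =>
    have eq_iff : x = y ↔ Fin.init x = Fin.init y ∧ x (Fin.last n) = y (Fin.last n) := by
      refine ⟨by rintro rfl; simp, fun ⟨h, h'⟩ => ?_⟩
      rw [← Fin.snoc_init_self x, ← Fin.snoc_init_self y, h, h']
    rw [Fin.sum_univ_castSucc, ← add_assoc]
    simp only [prefixAgreeWeight_castSucc, ih, prefixAgreeWeight_last, eq_iff, ite_and]
    split_ifs <;> simp [pow_succ, mul_two]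

end PrefixAgreeWeight

theorem sum_rIdx_mul_eq {n : ℕ} {P : Matrix (Fin (2 ^ n)) (Fin (2 ^ n)) ℝ}
    (h1 : ∀ (i : Fin n) (b : Fin (i : ℕ) → Fin 2) (x : Fin n → Fin 2),
      P (rIdx i b) (bitEnc x) =
        if ∀ k : Fin (i : ℕ), x ⟨(k : ℕ), k.isLt.trans i.isLt⟩ = b k
        then (-1 : ℝ) ^ ((x i : ℕ)) * Real.sqrt (2 ^ (i : ℕ)) / Real.sqrt (2 ^ n)
        else 0)
    (i : Fin n) (x y : Fin n → Fin 2) :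
    ∑ b : Fin i → Fin 2, P (rIdx i b) (bitEnc x) * P (rIdx i b) (bitEnc y) =
      prefixAgreeWeight x y i / 2 ^ n := by
  rw [sum_eq_single (fun k : Fin i => x ⟨k, k.isLt.trans i.isLt⟩)]
  · rw [h1, h1, if_pos fun _ => rfl, prefixAgreeWeight]
    by_cases hxy : ∀ k < i, x k = y k
    swap
    · rw [if_neg fun h => hxy fun k hk => (h ⟨k, hk⟩).symm, if_neg hxy, zero_div,
        mul_zero]
    rw [if_pos fun k => (hxy _ k.isLt).symm, if_pos hxy]
    have hsqrt (m : ℕ) : √(2 ^ m) * √(2 ^ m) = (2 : ℝ) ^ m := Real.mul_self_sqrt (by positivity)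
    calc (-1 : ℝ) ^ (x i : ℕ) * √(2 ^ (i : ℕ)) / √(2 ^ n) *
          ((-1) ^ (y i : ℕ) * √(2 ^ (i : ℕ)) / √(2 ^ n))
        = (-1) ^ (x i : ℕ) * (-1) ^ (y i : ℕ) * (√(2 ^ (i : ℕ)) * √(2 ^ (i : ℕ))) /
            (√(2 ^ n) * √(2 ^ n)) := by ring
      _ = _ := by
        rw [neg_one_pow_mul_neg_one_pow_fin_two, hsqrt, hsqrt]
        split_ifs <;> ring
  · intro b _ hb
    rw [h1, if_neg fun h => hb (funext fun k => (h k).symm), zero_mul]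
  · simp

theorem haar_stmt_15_general (n : ℕ)
    (P : Matrix (Fin (2 ^ n)) (Fin (2 ^ n)) ℝ)
    (h0 : ∀ x : Fin n → Fin 2,
      P (⟨0, Nat.two_pow_pos n⟩ : Fin (2 ^ n)) (bitEnc x) = 1 / Real.sqrt (2 ^ n))
    (h1 : ∀ (i : Fin n) (b : Fin (i : ℕ) → Fin 2) (x : Fin n → Fin 2),
      P (rIdx i b) (bitEnc x) =
        if ∀ k : Fin (i : ℕ), x ⟨(k : ℕ), k.isLt.trans i.isLt⟩ = b k
        then (-1 : ℝ) ^ ((x i : ℕ)) * Real.sqrt (2 ^ (i : ℕ)) / Real.sqrt (2 ^ n)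
        else 0) :
    P ∈ Matrix.unitaryGroup (Fin (2 ^ n)) ℝ := by
  rw [Matrix.mem_unitaryGroup_iff']
  ext x' y'
  obtain ⟨x, rfl⟩ := bitEnc_bijective.surjective x'
  obtain ⟨y, rfl⟩ := bitEnc_bijective.surjective y'
  have hsqrt : √(2 ^ n) * √(2 ^ n) = (2 : ℝ) ^ n := Real.mul_self_sqrt (by positivity)
  simp only [Matrix.mul_apply, Matrix.star_apply, star_trivial]
  rw [sum_fin_two_pow_eq_sum_rIdx, h0, h0, Fintype.sum_congr _ _ (sum_rIdx_mul_eq h1 · x y),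
    ← sum_div, div_mul_div_comm, one_mul, hsqrt, ← add_div, one_add_sum_prefixAgreeWeight,
    Matrix.one_apply]
  simp only [bitEnc_injective.eq_iff]
  split_ifs <;> simp

/-- The quantum Haar transformation `P_{2^n}`, defined entrywise by:
the row-`0` entry in column `x` is `1/√(2^n)`, and the row-`r_i(b)` entry in column `x`
is `(-1)^{x_i} √(2^i)/√(2^n)` if `(x_0,…,x_{i-1}) = b` and `0` otherwise, is unitary
(orthogonal). -/
theorem haar_stmt_15 (n : ℕ) (hn : 1 ≤ n)
    (P : Matrix (Fin (2 ^ n)) (Fin (2 ^ n)) ℝ)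
    (h0 : ∀ x : Fin n → Fin 2,
      P (⟨0, Nat.two_pow_pos n⟩ : Fin (2 ^ n)) (bitEnc x) = 1 / Real.sqrt (2 ^ n))
    (h1 : ∀ (i : Fin n) (b : Fin (i : ℕ) → Fin 2) (x : Fin n → Fin 2),
      P (rIdx i b) (bitEnc x) =
        if ∀ k : Fin (i : ℕ), x ⟨(k : ℕ), k.isLt.trans i.isLt⟩ = b k
        then (-1 : ℝ) ^ ((x i : ℕ)) * Real.sqrt (2 ^ (i : ℕ)) / Real.sqrt (2 ^ n)
        else 0) :
    P ∈ Matrix.unitaryGroup (Fin (2 ^ n)) ℝ :=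
  haar_stmt_15_general n P h0 h1
end
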